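/- arXiv:2309.04221 — 6 statements merged into one kernel-verified Lean document; each statement's English description precedes it below -/
import Mathlib

section
/- Fix natural numbers n, t, m ≥ 2 and sizes s_1, …, s_m ≥ 1 with s_1 + … + s_m ≤ n. An adaptive deterministic testing strategy is a family of functions T_k : (Fin k → Bool) → Finset (Fin n) for k < t; for an instance (S_1, …, S_m) of pairwise disjoint subsets of Fin n with |S_i| = s_i for all i, the outcome sequence o ∈ (Fin t → Bool) is defined recursively by: o_k = true iff T_k(o restricted to indices < k) intersects every S_i. Suppose there is a decoder D : (Fin t → Bool) → Finset (Finset (Fin n)) such that for every such instance, D applied to its outcome sequence equals the unordered family {S_1, …, S_m}. Then ∏_{i=1}^m C(n − ∑_{v=1}^{i−1} s_v, s_i) ≤ m! · 2^t. -/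
/-!
Count the ordered instances `(S 1, …, S m)` in two ways. Choosing the sets one after another
among the points not yet used gives at least `∏ i, C(n - ∑_{v<i} s v, s i)` of them. On the
other hand, a deterministic strategy makes the outcome sequence a function of the instance,
and the decoder recovers the unordered family `{S 1, …, S m}` from it. The `S i` are nonempty
and disjoint, hence distinct, so at most `m!` ordered instances share an outcome sequence,
and there are only `2 ^ t` outcome sequences.
-/

open Finset Function
open scoped Nat

namespace ConcGT

variable {α β : Type*} {m : ℕ}

theorem pairwise_disjoint_snoc {y : Fin m → Finset α} {X : Finset α} :
    Pairwise (Disjoint on (Fin.snoc y X : Fin (m + 1) → Finset α)) ↔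
      Pairwise (Disjoint on y) ∧ ∀ i, Disjoint (y i) X := by
  constructor
  · intro h
    refine ⟨fun i j hij => ?_, fun i => ?_⟩
    · simpa [onFun] using h (Fin.castSucc_injective _ |>.ne hij)
    · simpa [onFun] using h (Fin.castSucc_ne_last i)
  · rintro ⟨hy, hX⟩ i j hij
    induction i using Fin.lastCases with
    | last =>
      induction j using Fin.lastCases with
      | last => exact absurd rfl hij
      | cast j => simpa [onFun] using (hX j).symm
    | cast i =>
      induction j using Fin.lastCases with
      | last => simpa [onFun] using hX i
      | cast j => simpa [onFun] using hy (ne_of_apply_ne Fin.castSucc hij)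

open Classical in
noncomputable def instances (α : Type*) [Fintype α] (s : Fin m → ℕ) :
    Finset (Fin m → Finset α) :=
  {S | Pairwise (Disjoint on S) ∧ ∀ i, #(S i) = s i}

section Instances

variable [Fintype α]

theorem mem_instances {s : Fin m → ℕ} {S : Fin m → Finset α} :
    S ∈ instances α s ↔ Pairwise (Disjoint on S) ∧ ∀ i, #(S i) = s i := by
  simp [instances]

theorem injective_of_mem_instances {s : Fin m → ℕ} (hs : ∀ i, 0 < s i) {S : Fin m → Finset α}
    (hS : S ∈ instances α s) : Injective S := by
  obtain ⟨hdisj, hcard⟩ := mem_instances.1 hS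
  intro i j hij
  by_contra hne
  have hempty : S j = ∅ := disjoint_self.1 (by simpa [onFun, hij] using hdisj hne)
  simpa [← hcard j, hempty] using hs j

theorem init_mem_instances {s : Fin (m + 1) → ℕ} {S : Fin (m + 1) → Finset α}
    (hS : S ∈ instances α s) : Fin.init S ∈ instances α (Fin.init s) := by
  obtain ⟨hdisj, hcard⟩ := mem_instances.1 hS
  exact mem_instances.2 ⟨fun i j hij => hdisj ((Fin.castSucc_injective m).ne hij), fun i => hcard _⟩

variable [DecidableEq α]

theorem snoc_mem_instances {s : Fin (m + 1) → ℕ} {y : Fin m → Finset α}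
    (hy : y ∈ instances α (Fin.init s)) {X : Finset α}
    (hX : X ∈ powersetCard (s (Fin.last m)) (univ \ univ.biUnion y)) :
    (Fin.snoc y X : Fin (m + 1) → Finset α) ∈ instances α s := by
  obtain ⟨hdisj, hcard⟩ := mem_instances.1 hy
  obtain ⟨hXsub, hXcard⟩ := mem_powersetCard.1 hX
  refine mem_instances.2 ⟨pairwise_disjoint_snoc.2 ⟨hdisj, fun i => ?_⟩, fun i => ?_⟩
  · exact (disjoint_sdiff.mono_left (subset_biUnion_of_mem y (mem_univ i))).mono_right hXsub
  · induction i using Fin.lastCases with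
    | last => simpa using hXcard
    | cast i => simpa [Fin.init] using hcard i

theorem choose_le_card_filter_init_eq {s : Fin (m + 1) → ℕ} {y : Fin m → Finset α}
    (hy : y ∈ instances α (Fin.init s)) :
    (Fintype.card α - ∑ v, Fin.init s v).choose (s (Fin.last m)) ≤
      #{S ∈ instances α s | Fin.init S = y} := by
  set U := univ \ univ.biUnion y
  have hU : Fintype.card α - ∑ v, Fin.init s v ≤ #U := by
    rw [card_sdiff_of_subset (subset_univ _), card_univ]
    refine Nat.sub_le_sub_left (card_biUnion_le.trans (sum_le_sum fun i _ => ?_)) _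
    exact ((mem_instances.1 hy).2 i).le
  calc (Fintype.card α - ∑ v, Fin.init s v).choose (s (Fin.last m))
      ≤ #(powersetCard (s (Fin.last m)) U) := by
        rw [card_powersetCard]; exact Nat.choose_le_choose _ hU
    _ ≤ #{S ∈ instances α s | Fin.init S = y} := by
        refine card_le_card_of_injOn (fun X => (Fin.snoc y X : Fin (m + 1) → Finset α))
          (fun X hX => ?_) fun X _ X' _ h => ?_
        · exact mem_filter.2 ⟨snoc_mem_instances hy hX, Fin.init_snoc _ _⟩
        · simpa using congrFun h (Fin.last m)

theorem prod_choose_le_card_instances (s : Fin m → ℕ) :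
    ∏ i, (Fintype.card α - ∑ v ∈ Iio i, s v).choose (s i) ≤ #(instances α s) := by
  induction m with
  | zero =>
    simpa using card_pos.2 ⟨Fin.elim0, mem_instances.2 ⟨fun i => i.elim0, fun i => i.elim0⟩⟩
  | succ m ih =>
    rw [Fin.prod_univ_castSucc, Fin.Iio_last_eq_map, sum_map]
    simp_rw [Fin.Iio_castSucc, sum_map]
    calc _ ≤ #(instances α (Fin.init s)) *
          (Fintype.card α - ∑ v, Fin.init s v).choose (s (Fin.last m)) :=
          Nat.mul_le_mul_right _ (ih (Fin.init s))
      _ ≤ #(instances α s) := by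
        rw [mul_comm]
        exact mul_card_image_le_card_of_maps_to (fun _ => init_mem_instances) _
          fun _ => choose_le_card_filter_init_eq

end Instances

theorem card_le_factorial_of_image_eq [DecidableEq β] {A : Finset (Fin m → β)} {F : Finset β}
    (hinj : ∀ S ∈ A, Injective S) (himage : ∀ S ∈ A, image S univ = F) : #A ≤ m ! := by
  obtain rfl | ⟨S₀, hS₀⟩ := A.eq_empty_or_nonempty
  · simp
  have hF : #F = m := by rw [← himage S₀ hS₀, card_image_of_injective _ (hinj S₀ hS₀), card_fin]
  calc #A ≤ #(univ : Finset (Fin m ↪ F)) := by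
        refine card_le_card_of_surjOn (fun e i => (e i : β)) fun S hS => ?_
        have hmem : ∀ i, S i ∈ F := fun i => himage S hS ▸ mem_image_of_mem S (mem_univ i)
        exact ⟨⟨fun i => ⟨S i, hmem i⟩, fun i j h => hinj S hS (congrArg Subtype.val h)⟩,
          mem_univ _, rfl⟩
    _ = m ! := by
        rw [card_univ, Fintype.card_embedding_eq, Fintype.card_coe, hF, Fintype.card_fin,
          Nat.descFactorial_self]

theorem card_le_factorial_mul_card_of_decode [DecidableEq β] {γ : Type*} [Fintype γ]
    [DecidableEq γ] (A : Finset (Fin m → β)) (g : (Fin m → β) → γ) (D : γ → Finset β)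
    (hinj : ∀ S ∈ A, Injective S) (hD : ∀ S ∈ A, D (g S) = image S univ) :
    #A ≤ m ! * Fintype.card γ :=
  card_le_mul_card_image_of_maps_to (f := g) (fun _ _ => mem_univ _) _ fun o _ =>
    card_le_factorial_of_image_eq (F := D o) (fun S hS => hinj S (mem_filter.1 hS).1)
      fun S hS => by
        obtain ⟨hSA, hgS⟩ := mem_filter.1 hS
        rw [← hgS, hD S hSA]

variable [DecidableEq α]

/-- Indexed by `ℕ` so that the recursion on earlier outcomes is well-founded recursion on `k`;
the values at `k ≥ t` are never used. -/
def outcome {t : ℕ} (T : (k : Fin t) → (Fin k → Bool) → Finset α) (S : Fin m → Finset α)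
    (k : ℕ) : Bool :=
  if h : k < t then decide (∀ i, (T ⟨k, h⟩ (fun j : Fin k => outcome T S j) ∩ S i).Nonempty)
  else false
termination_by k
decreasing_by all_goals exact j.isLt

theorem outcome_eq_true_iff {t : ℕ} (T : (k : Fin t) → (Fin k → Bool) → Finset α)
    (S : Fin m → Finset α) (k : Fin t) :
    outcome T S k = true ↔ ∀ i, (T k (fun j : Fin k => outcome T S j) ∩ S i).Nonempty := by
  rw [outcome, dif_pos k.isLt, decide_eq_true_iff]

end ConcGT

open ConcGT in
theorem stmt1_general (n t m : ℕ) (s : Fin m → ℕ) (hs : ∀ i, 1 ≤ s i)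
    (T : (k : Fin t) → (Fin (k : ℕ) → Bool) → Finset (Fin n))
    (D : (Fin t → Bool) → Finset (Finset (Fin n)))
    (hD : ∀ S : Fin m → Finset (Fin n),
      (∀ i j, i ≠ j → Disjoint (S i) (S j)) → (∀ i, (S i).card = s i) →
      ∀ o : Fin t → Bool,
        (∀ k : Fin t, o k = true ↔
          ∀ i : Fin m, ((T k (fun j : Fin (k : ℕ) => o ⟨j.val, j.isLt.trans k.isLt⟩)) ∩ S i).Nonempty) →
        D o = Finset.image S Finset.univ) :
    ∏ i : Fin m, Nat.choose (n - ∑ v ∈ Finset.Iio i, s v) (s i) ≤ Nat.factorial m * 2 ^ t := by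
  have hdecode : ∀ S ∈ instances (Fin n) s, D (fun k => outcome T S k) = image S univ :=
    fun S hS => hD S (fun i j hij => (mem_instances.1 hS).1 hij) (mem_instances.1 hS).2 _
      (outcome_eq_true_iff T S)
  calc ∏ i, (n - ∑ v ∈ Iio i, s v).choose (s i)
      = ∏ i, (Fintype.card (Fin n) - ∑ v ∈ Iio i, s v).choose (s i) := by rw [Fintype.card_fin]
    _ ≤ #(instances (Fin n) s) := prod_choose_le_card_instances s
    _ ≤ m ! * Fintype.card (Fin t → Bool) :=
      card_le_factorial_mul_card_of_decode _ _ D (fun _ => injective_of_mem_instances hs) hdecode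
    _ = m ! * 2 ^ t := by simp

/-- Counting lower bound for adaptive deterministic concomitant group testing:
if an adaptive deterministic strategy `T` with `t` tests and decoder `D` recovers the
unordered family `{S 1, …, S m}` for every instance of `m` pairwise disjoint subsets with
`|S i| = s i`, then `∏ i, C(n − ∑_{v<i} s v, s i) ≤ m! · 2^t`. -/
theorem stmt1 (n t m : ℕ) (hm : 2 ≤ m) (s : Fin m → ℕ) (hs : ∀ i, 1 ≤ s i)
    (hsum : ∑ i, s i ≤ n)
    (T : (k : Fin t) → (Fin (k : ℕ) → Bool) → Finset (Fin n))
    (D : (Fin t → Bool) → Finset (Finset (Fin n)))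
    (hD : ∀ S : Fin m → Finset (Fin n),
      (∀ i j, i ≠ j → Disjoint (S i) (S j)) → (∀ i, (S i).card = s i) →
      ∀ o : Fin t → Bool,
        (∀ k : Fin t, o k = true ↔
          ∀ i : Fin m, ((T k (fun j : Fin (k : ℕ) => o ⟨j.val, j.isLt.trans k.isLt⟩)) ∩ S i).Nonempty) →
        D o = Finset.image S Finset.univ) :
    ∏ i : Fin m, Nat.choose (n - ∑ v ∈ Finset.Iio i, s v) (s i) ≤ Nat.factorial m * 2 ^ t :=
  stmt1_general n t m s hs T D hD
end

section
/- Let n, m be natural numbers and s_1, …, s_m natural numbers with s_i ≥ 1 for all i and 2(s_1 + … + s_m) ≤ n. Then, as real numbers, ∏_{i=1}^m C(n − ∑_{v=1}^{i−1} s_v, s_i) ≥ ∏_{i=1}^m (n / (2 s_i))^{s_i}, where C(a, b) denotes the binomial coefficient. -/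
lemma pow_div_le_choose (a b : ℕ) (hba : b ≤ a) :
    ((a : ℝ) / b) ^ b ≤ (Nat.choose a b : ℝ) := by
  induction b generalizing a with
  | zero => simp
  | succ b ih =>
    obtain ⟨a, rfl⟩ : ∃ a', a = a' + 1 := ⟨a - 1, by omega⟩
    have hb : b ≤ a := by omega
    have key : (Nat.choose (a + 1) (b + 1) : ℝ)
        = ((a : ℝ) + 1) / ((b : ℝ) + 1) * Nat.choose a b := by
      have h := Nat.add_one_mul_choose_eq a b
      have h' : ((a : ℝ) + 1) * Nat.choose a b
          = (Nat.choose (a + 1) (b + 1) : ℝ) * ((b : ℝ) + 1) := by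
        exact_mod_cast congrArg (Nat.cast (R := ℝ)) h
      field_simp
      linarith
    have hmain : (((a : ℝ) + 1) / ((b : ℝ) + 1)) ^ b ≤ (Nat.choose a b : ℝ) := by
      rcases Nat.eq_zero_or_pos b with rfl | hbpos
      · simp
      refine le_trans ?_ (ih a hb)
      have hxy : ((a : ℝ) + 1) / ((b : ℝ) + 1) ≤ (a : ℝ) / (b : ℝ) := by
        rw [div_le_div_iff₀ (by positivity) (by positivity)]
        have : (b : ℝ) ≤ (a : ℝ) := by exact_mod_cast hb
        nlinarith
      exact pow_le_pow_left₀ (by positivity) hxy b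
    rw [key]
    push_cast
    rw [pow_succ, mul_comm]
    exact mul_le_mul_of_nonneg_left hmain (by positivity)

/-- Quantitative simplification of the ConcGT counting lower bound: if each `s i ≥ 1` and
`2 ∑ i, s i ≤ n`, then `∏ i, C(n − ∑_{v<i} s v, s i) ≥ ∏ i, (n / (2 s i))^(s i)` over the reals. -/
theorem stmt2 (n m : ℕ) (s : Fin m → ℕ) (hs : ∀ i, 1 ≤ s i) (hsum : 2 * ∑ i, s i ≤ n) :
    ∏ i : Fin m, ((n : ℝ) / (2 * (s i : ℝ))) ^ (s i) ≤
      ∏ i : Fin m, (Nat.choose (n - ∑ v ∈ Finset.Iio i, s v) (s i) : ℝ) := by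
  refine Finset.prod_le_prod (fun i _ => by positivity) (fun i _ => ?_)
  set a := n - ∑ v ∈ Finset.Iio i, s v with ha
  have hIio : ∑ v ∈ Finset.Iio i, s v + s i ≤ ∑ v, s v := by
    have : ∑ v ∈ insert i (Finset.Iio i), s v ≤ ∑ v, s v :=
      Finset.sum_le_sum_of_subset (Finset.subset_univ _)
    rw [Finset.sum_insert (by simp)] at this; omega
  have hsa : s i ≤ a := by omega
  have h2a : n ≤ 2 * a := by omega
  have hspos : (0:ℝ) < s i := by exact_mod_cast hs i
  have h2a' : (n : ℝ) ≤ 2 * a := by exact_mod_cast h2a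
  refine le_trans (pow_le_pow_left₀ (by positivity) ?_ _) (pow_div_le_choose a (s i) hsa)
  rw [div_le_div_iff₀ (by positivity) hspos]
  nlinarith
end

section
/- Let M be a binary t × n matrix that is (n, 2, s)-disjunct, with n ≥ s + 2. Let S_1 and S_2 be disjoint nonempty subsets of Fin n with |S_1| ≤ s and |S_2| ≤ s, and let x_1 ≠ x_2 be two elements of Fin n. Then the pair {x_1, x_2} is defective (i.e., one of x_1, x_2 lies in S_1 and the other lies in S_2) if and only if every row i of M with M_{i,x_1} = 1 and M_{i,x_2} = 1 has support intersecting both S_1 and S_2 (i.e., every such test is positive). -/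
/-- A binary `t × n` matrix `M` is `(n, u, v)`-disjunct if for any `u + v` distinct columns
(given as disjoint sets `U` of size `u` and `V` of size `v`) there exists a row in which all
columns of `U` have entry `1` and all columns of `V` have entry `0`. -/
def IsDisjunct (t n u v : ℕ) (M : Fin t → Fin n → Bool) : Prop :=
  ∀ U V : Finset (Fin n), U.card = u → V.card = v → Disjoint U V →
    ∃ i : Fin t, (∀ j ∈ U, M i j = true) ∧ (∀ j ∈ V, M i j = false)

lemma key_aux (t n s : ℕ) (hn : s + 2 ≤ n) (M : Fin t → Fin n → Bool)
    (hM : IsDisjunct t n 2 s M) (S : Finset (Fin n)) (hc : S.card ≤ s)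
    (x1 x2 : Fin n) (hx : x1 ≠ x2) (h1 : x1 ∉ S) (h2 : x2 ∉ S) :
    ∃ i : Fin t, M i x1 = true ∧ M i x2 = true ∧ ∀ j ∈ S, M i j = false := by
  have hSsub : S ⊆ Finset.univ \ {x1, x2} := by
    intro j hj
    simp only [Finset.mem_sdiff, Finset.mem_univ, true_and, Finset.mem_insert,
      Finset.mem_singleton]
    rintro (rfl | rfl) <;> [exact h1 hj; exact h2 hj]
  have hcard : (Finset.univ \ ({x1, x2} : Finset (Fin n))).card = n - 2 := by
    rw [Finset.card_sdiff_of_subset (by simp)]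
    simp [Finset.card_insert_of_notMem, hx]
  obtain ⟨V, hSV, hVsub, hVcard⟩ := Finset.exists_subsuperset_card_eq hSsub hc
    (by omega)
  obtain ⟨i, hU, hV⟩ := hM {x1, x2} V (by simp [hx]) hVcard (by
    rw [Finset.disjoint_left]
    intro a ha haV
    have := hVsub haV
    simp only [Finset.mem_sdiff, Finset.mem_univ, true_and] at this
    exact this ha)
  exact ⟨i, hU x1 (by simp), hU x2 (by simp), fun j hj => hV j (hSV hj)⟩

/-- For an `(n, 2, s)`-disjunct matrix with `n ≥ s + 2`, a pair `{x₁, x₂}` of distinct items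
is defective (one item in `S₁` and the other in `S₂`) iff every row containing both `x₁` and
`x₂` has support intersecting both `S₁` and `S₂` (i.e., every such test is positive). -/
theorem stmt3 (t n s : ℕ) (hn : s + 2 ≤ n) (M : Fin t → Fin n → Bool)
    (hM : IsDisjunct t n 2 s M)
    (S1 S2 : Finset (Fin n)) (hdisj : Disjoint S1 S2)
    (h1 : S1.Nonempty) (h2 : S2.Nonempty)
    (hc1 : S1.card ≤ s) (hc2 : S2.card ≤ s)
    (x1 x2 : Fin n) (hx : x1 ≠ x2) :
    ((x1 ∈ S1 ∧ x2 ∈ S2) ∨ (x1 ∈ S2 ∧ x2 ∈ S1)) ↔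
      (∀ i : Fin t, M i x1 = true → M i x2 = true →
        (∃ j ∈ S1, M i j = true) ∧ (∃ j ∈ S2, M i j = true)) := by
  constructor
  · rintro (⟨hx1, hx2⟩ | ⟨hx1, hx2⟩) i hi1 hi2
    · exact ⟨⟨x1, hx1, hi1⟩, ⟨x2, hx2, hi2⟩⟩
    · exact ⟨⟨x2, hx2, hi2⟩, ⟨x1, hx1, hi1⟩⟩
  · intro h
    by_contra hnd
    push_neg at hnd
    obtain ⟨hA, hB⟩ := hnd
    have d1 : x1 ∈ S1 → x1 ∉ S2 := fun h => Finset.disjoint_left.mp hdisj h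
    have d2 : x2 ∈ S1 → x2 ∉ S2 := fun h => Finset.disjoint_left.mp hdisj h
    have hcase : (x1 ∉ S1 ∧ x2 ∉ S1) ∨ (x1 ∉ S2 ∧ x2 ∉ S2) := by tauto
    rcases hcase with ⟨e1, e2⟩ | ⟨e1, e2⟩
    · obtain ⟨i, hi1, hi2, hzero⟩ := key_aux t n s hn M hM S1 hc1 x1 x2 hx e1 e2
      obtain ⟨⟨j, hj, hjv⟩, -⟩ := h i hi1 hi2
      exact absurd hjv (by simp [hzero j hj])
    · obtain ⟨i, hi1, hi2, hzero⟩ := key_aux t n s hn M hM S2 hc2 x1 x2 hx e1 e2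
      obtain ⟨-, ⟨j, hj, hjv⟩⟩ := h i hi1 hi2
      exact absurd hjv (by simp [hzero j hj])
end

section
/- Let M be a binary t × n matrix that is (n, 2, s)-disjunct, with n ≥ s + 2. Let (S_1, S_2) and (S_1', S_2') be two pairs of disjoint nonempty subsets of Fin n, each of cardinality at most s. Suppose the two instances produce identical test outcomes on every row of M, i.e., for every row i: (supp(M(i,:)) ∩ S_1 ≠ ∅ ∧ supp(M(i,:)) ∩ S_2 ≠ ∅) ↔ (supp(M(i,:)) ∩ S_1' ≠ ∅ ∧ supp(M(i,:)) ∩ S_2' ≠ ∅). Then {S_1, S_2} = {S_1', S_2'} as unordered pairs. In other words, any (n, 2, s)-disjunct matrix is a non-adaptive zero-error design for ConcGT with two semi-defective sets of size at most s. -/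
/-- Key test row: two distinct columns `x, y` can be forced to `1` while any set `W`
of at most `s` other columns is forced to `0`. -/
lemma key_row {t n s : ℕ} (hn : s + 2 ≤ n) {M : Fin t → Fin n → Bool}
    (hM : IsDisjunct t n 2 s M) {x y : Fin n} (hxy : x ≠ y)
    {W : Finset (Fin n)} (hW : W.card ≤ s) (hx : x ∉ W) (hy : y ∉ W) :
    ∃ i : Fin t, M i x = true ∧ M i y = true ∧ ∀ j ∈ W, M i j = false := by
  have hsub : W ⊆ Finset.univ \ {x, y} := by
    intro j hj
    simp only [Finset.mem_sdiff, Finset.mem_univ, Finset.mem_insert, Finset.mem_singleton,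
      true_and]
    rintro (rfl | rfl)
    · exact hx hj
    · exact hy hj
  have hcard : (Finset.univ \ ({x, y} : Finset (Fin n))).card = n - 2 := by
    rw [Finset.card_sdiff_of_subset (Finset.subset_univ _), Finset.card_pair hxy]
    simp
  obtain ⟨V, hWV, hVsub, hVcard⟩ := Finset.exists_subsuperset_card_eq hsub hW
    (by omega : s ≤ (Finset.univ \ ({x, y} : Finset (Fin n))).card)
  have hUV : Disjoint ({x, y} : Finset (Fin n)) V := by
    rw [Finset.disjoint_right]
    intro j hj
    have := hVsub hj
    simp only [Finset.mem_sdiff] at this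
    exact this.2
  obtain ⟨i, h1, h0⟩ := hM {x, y} V (Finset.card_pair hxy) hVcard hUV
  exact ⟨i, h1 x (by simp), h1 y (by simp), fun j hj => h0 j (hWV hj)⟩

/-- Every element of `S1` lies in `S1' ∪ S2'`. -/
lemma subT {t n s : ℕ} (hn : s + 2 ≤ n) {M : Fin t → Fin n → Bool}
    (hM : IsDisjunct t n 2 s M) {S1 S2 S1' S2' : Finset (Fin n)}
    (hdisj : Disjoint S1 S2) (hdisj' : Disjoint S1' S2') (h2 : S2.Nonempty)
    (hc1' : S1'.card ≤ s) (hc2' : S2'.card ≤ s)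
    (hout : ∀ i : Fin t,
      ((∃ j ∈ S1, M i j = true) ∧ (∃ j ∈ S2, M i j = true)) ↔
      ((∃ j ∈ S1', M i j = true) ∧ (∃ j ∈ S2', M i j = true))) :
    S1 ⊆ S1' ∪ S2' := by
  intro x hx
  by_contra hxT
  simp only [Finset.mem_union, not_or] at hxT
  by_cases hA : ∃ a ∈ S2, a ∉ S1'
  · obtain ⟨a, ha, ha'⟩ := hA
    have hxa : x ≠ a := fun h => Finset.disjoint_left.mp hdisj hx (h ▸ ha)
    obtain ⟨i, hix, hia, h0⟩ := key_row hn hM hxa hc1' hxT.1 ha'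
    obtain ⟨⟨j, hj, hjt⟩, -⟩ := (hout i).mp ⟨⟨x, hx, hix⟩, ⟨a, ha, hia⟩⟩
    rw [h0 j hj] at hjt
    exact Bool.false_ne_true hjt
  · push_neg at hA
    by_cases hB : ∃ a ∈ S2, a ∉ S2'
    · obtain ⟨a, ha, ha'⟩ := hB
      have hxa : x ≠ a := fun h => Finset.disjoint_left.mp hdisj hx (h ▸ ha)
      obtain ⟨i, hix, hia, h0⟩ := key_row hn hM hxa hc2' hxT.2 ha'
      obtain ⟨-, ⟨j, hj, hjt⟩⟩ := (hout i).mp ⟨⟨x, hx, hix⟩, ⟨a, ha, hia⟩⟩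
      rw [h0 j hj] at hjt
      exact Bool.false_ne_true hjt
    · push_neg at hB
      obtain ⟨a, ha⟩ := h2
      exact Finset.disjoint_left.mp hdisj' (hA a ha) (hB a ha)

/-- If two elements of `S1` lie one in `S1'` and one in `S2'`, contradiction. -/
lemma pairF {t n s : ℕ} (hn : s + 2 ≤ n) {M : Fin t → Fin n → Bool}
    (hM : IsDisjunct t n 2 s M) {S1 S2 S1' S2' : Finset (Fin n)}
    (hdisj : Disjoint S1 S2) (hdisj' : Disjoint S1' S2')
    (hc2 : S2.card ≤ s)
    (hout : ∀ i : Fin t,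
      ((∃ j ∈ S1, M i j = true) ∧ (∃ j ∈ S2, M i j = true)) ↔
      ((∃ j ∈ S1', M i j = true) ∧ (∃ j ∈ S2', M i j = true)))
    {x y : Fin n} (hx1 : x ∈ S1) (hy1 : y ∈ S1) (hx' : x ∈ S1') (hy' : y ∈ S2') :
    False := by
  have hxy : x ≠ y := fun h => Finset.disjoint_left.mp hdisj' hx' (h ▸ hy')
  obtain ⟨i, hix, hiy, h0⟩ := key_row hn hM hxy hc2
    (Finset.disjoint_left.mp hdisj hx1) (Finset.disjoint_left.mp hdisj hy1)
  obtain ⟨-, ⟨j, hj, hjt⟩⟩ := (hout i).mpr ⟨⟨x, hx', hix⟩, ⟨y, hy', hiy⟩⟩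
  rw [h0 j hj] at hjt
  exact Bool.false_ne_true hjt

/-- Any `(n, 2, s)`-disjunct matrix (with `n ≥ s + 2`) is a non-adaptive zero-error design for
ConcGT with two semi-defective sets of size at most `s`: if two instances `(S₁, S₂)` and
`(S₁', S₂')` produce identical test outcomes on every row, then `{S₁, S₂} = {S₁', S₂'}`. -/
theorem stmt5 (t n s : ℕ) (hn : s + 2 ≤ n) (M : Fin t → Fin n → Bool)
    (hM : IsDisjunct t n 2 s M)
    (S1 S2 S1' S2' : Finset (Fin n))
    (hdisj : Disjoint S1 S2) (hdisj' : Disjoint S1' S2')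
    (h1 : S1.Nonempty) (h2 : S2.Nonempty) (h1' : S1'.Nonempty) (h2' : S2'.Nonempty)
    (hc1 : S1.card ≤ s) (hc2 : S2.card ≤ s) (hc1' : S1'.card ≤ s) (hc2' : S2'.card ≤ s)
    (houtcomes : ∀ i : Fin t,
      ((∃ j ∈ S1, M i j = true) ∧ (∃ j ∈ S2, M i j = true)) ↔
      ((∃ j ∈ S1', M i j = true) ∧ (∃ j ∈ S2', M i j = true))) :
    ({S1, S2} : Finset (Finset (Fin n))) = {S1', S2'} := by
  have hT1 : S1 ⊆ S1' ∪ S2' := subT hn hM hdisj hdisj' h2 hc1' hc2' houtcomes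
  have hT2 : S2 ⊆ S1' ∪ S2' := subT hn hM hdisj.symm hdisj' h1 hc1' hc2'
    (fun i => Iff.trans and_comm (houtcomes i))
  have hT1' : S1' ⊆ S1 ∪ S2 := subT hn hM hdisj' hdisj h2' hc1 hc2
    (fun i => (houtcomes i).symm)
  have hT2' : S2' ⊆ S1 ∪ S2 := subT hn hM hdisj'.symm hdisj h1' hc1 hc2
    (fun i => Iff.trans and_comm (houtcomes i).symm)
  rcases eq_or_ne S1 S1' with hE | hE
  · have hS2 : S2 = S2' := by
      ext z
      constructor
      · intro hz
        rcases Finset.mem_union.mp (hT2 hz) with hz' | hz'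
        · exact absurd hz (Finset.disjoint_left.mp hdisj (hE ▸ hz'))
        · exact hz'
      · intro hz
        rcases Finset.mem_union.mp (hT2' hz) with hz' | hz'
        · exact absurd hz (Finset.disjoint_left.mp hdisj' (hE ▸ hz'))
        · exact hz'
    rw [hE, hS2]
  rcases eq_or_ne S1 S2' with hE2 | hE2
  · have hS2 : S2 = S1' := by
      ext z
      constructor
      · intro hz
        rcases Finset.mem_union.mp (hT2 hz) with hz' | hz'
        · exact hz'
        · exact absurd hz (Finset.disjoint_left.mp hdisj (hE2 ▸ hz'))
      · intro hz
        rcases Finset.mem_union.mp (hT1' hz) with hz' | hz'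
        · exact absurd hz' (fun h => Finset.disjoint_right.mp hdisj' (hE2 ▸ h) hz)
        · exact hz'
    rw [hE2, hS2, Finset.pair_comm]
  exfalso
  -- four classes
  have hBC : (∃ z, z ∈ S1 ∧ z ∈ S2') ∨ (∃ z, z ∈ S2 ∧ z ∈ S1') := by
    have hne : ¬(S1 ⊆ S1' ∧ S1' ⊆ S1) := fun ⟨a, b⟩ => hE (Finset.Subset.antisymm a b)
    rcases not_and_or.mp hne with hns | hns
    · obtain ⟨z, hz, hz'⟩ := Finset.not_subset.mp hns
      rcases Finset.mem_union.mp (hT1 hz) with h | h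
      · exact absurd h hz'
      · exact Or.inl ⟨z, hz, h⟩
    · obtain ⟨z, hz, hz'⟩ := Finset.not_subset.mp hns
      rcases Finset.mem_union.mp (hT1' hz) with h | h
      · exact absurd h hz'
      · exact Or.inr ⟨z, h, hz⟩
  have hAD : (∃ z, z ∈ S1 ∧ z ∈ S1') ∨ (∃ z, z ∈ S2 ∧ z ∈ S2') := by
    have hne : ¬(S1 ⊆ S2' ∧ S2' ⊆ S1) := fun ⟨a, b⟩ => hE2 (Finset.Subset.antisymm a b)
    rcases not_and_or.mp hne with hns | hns
    · obtain ⟨z, hz, hz'⟩ := Finset.not_subset.mp hns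
      rcases Finset.mem_union.mp (hT1 hz) with h | h
      · exact Or.inl ⟨z, hz, h⟩
      · exact absurd h hz'
    · obtain ⟨z, hz, hz'⟩ := Finset.not_subset.mp hns
      rcases Finset.mem_union.mp (hT2' hz) with h | h
      · exact absurd h hz'
      · exact Or.inr ⟨z, h, hz⟩
  have hAC : (∃ z, z ∈ S1 ∧ z ∈ S1') ∨ (∃ z, z ∈ S2 ∧ z ∈ S1') := by
    obtain ⟨z, hz⟩ := h1'
    rcases Finset.mem_union.mp (hT1' hz) with h | h
    · exact Or.inl ⟨z, h, hz⟩
    · exact Or.inr ⟨z, h, hz⟩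
  have hBD : (∃ z, z ∈ S1 ∧ z ∈ S2') ∨ (∃ z, z ∈ S2 ∧ z ∈ S2') := by
    obtain ⟨z, hz⟩ := h2'
    rcases Finset.mem_union.mp (hT2' hz) with h | h
    · exact Or.inl ⟨z, h, hz⟩
    · exact Or.inr ⟨z, h, hz⟩
  -- reduce to a pair in S1 or a pair in S2
  have hfinal : ((∃ z, z ∈ S1 ∧ z ∈ S1') ∧ (∃ z, z ∈ S1 ∧ z ∈ S2')) ∨
      ((∃ z, z ∈ S2 ∧ z ∈ S1') ∧ (∃ z, z ∈ S2 ∧ z ∈ S2')) := by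
    rcases hBC with hB | hC
    · rcases hAD with hA | hD
      · exact Or.inl ⟨hA, hB⟩
      · rcases hAC with hA | hC
        · exact Or.inl ⟨hA, hB⟩
        · exact Or.inr ⟨hC, hD⟩
    · rcases hAD with hA | hD
      · rcases hBD with hB | hD
        · exact Or.inl ⟨hA, hB⟩
        · exact Or.inr ⟨hC, hD⟩
      · exact Or.inr ⟨hC, hD⟩
  rcases hfinal with ⟨⟨x, hx1, hx'⟩, ⟨y, hy1, hy'⟩⟩ | ⟨⟨x, hx2, hx'⟩, ⟨y, hy2, hy'⟩⟩
  · exact pairF hn hM hdisj hdisj' hc2 houtcomes hx1 hy1 hx' hy'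
  · exact pairF hn hM hdisj.symm hdisj' hc1
      (fun i => Iff.trans and_comm (houtcomes i)) hx2 hy2 hx' hy'
end

section
/- Let S_1 and S_2 be disjoint subsets of a ground set N, and for X ⊆ N write positive(X) for the predicate X ∩ S_1 ≠ ∅ ∧ X ∩ S_2 ≠ ∅. Let A ⊆ N satisfy ¬positive(A), and let (B_j)_{j ∈ J} be a family of subsets of N. Suppose there exists j ∈ J with positive(A ∪ B_j) ≢ positive(B_j). Then exactly one of the following holds: (a) A ∩ S_1 = ∅, A ∩ S_2 ≠ ∅, and there exists j ∈ J with B_j ∩ S_1 ≠ ∅ and B_j ∩ S_2 = ∅; or (b) A ∩ S_1 ≠ ∅, A ∩ S_2 = ∅, and there exists j ∈ J with B_j ∩ S_1 = ∅ and B_j ∩ S_2 ≠ ∅. Moreover, in either case there exists j ∈ J with ¬positive(B_j) and positive(A ∪ B_j). -/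
/-- A test on `X` is positive iff `X` intersects both semi-defective sets. -/
def positiveTest {α : Type*} (S1 S2 X : Set α) : Prop :=
  (X ∩ S1).Nonempty ∧ (X ∩ S2).Nonempty

/-- Correctness of the decoding step of the non-adaptive randomized ConcGT design: if `A` is
a negative pool and for some `j` the outcome of `A ∪ B j` differs from that of `B j`, then
exactly one of: (a) `A` intersects only `S₂` and some `B j` intersects only `S₁`;
(b) `A` intersects only `S₁` and some `B j` intersects only `S₂`. Moreover, in either case
some `B j` is negative while `A ∪ B j` is positive. -/
theorem stmt12 {α : Type*} {J : Type*} (S1 S2 : Set α) (hdisj : Disjoint S1 S2)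
    (A : Set α) (hA : ¬ positiveTest S1 S2 A) (B : J → Set α)
    (h : ∃ j : J, ¬ (positiveTest S1 S2 (A ∪ B j) ↔ positiveTest S1 S2 (B j))) :
    Xor' (A ∩ S1 = ∅ ∧ (A ∩ S2).Nonempty ∧
            ∃ j : J, (B j ∩ S1).Nonempty ∧ B j ∩ S2 = ∅)
         ((A ∩ S1).Nonempty ∧ A ∩ S2 = ∅ ∧
            ∃ j : J, B j ∩ S1 = ∅ ∧ (B j ∩ S2).Nonempty) ∧
    ∃ j : J, ¬ positiveTest S1 S2 (B j) ∧ positiveTest S1 S2 (A ∪ B j) := by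

  obtain ⟨j, hj⟩ := h
  have mono : positiveTest S1 S2 (B j) → positiveTest S1 S2 (A ∪ B j) := by
    rintro ⟨⟨x, hx⟩, ⟨y, hy⟩⟩
    exact ⟨⟨x, Or.inr hx.1, hx.2⟩, ⟨y, Or.inr hy.1, hy.2⟩⟩
  have hP : positiveTest S1 S2 (A ∪ B j) := by tauto
  have hQ : ¬ positiveTest S1 S2 (B j) := by tauto
  have hP' := hP
  simp only [positiveTest, Set.union_inter_distrib_right, Set.union_nonempty] at hP'
  simp only [positiveTest, not_and_or, Set.not_nonempty_iff_eq_empty] at hA hQ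
  rcases Set.eq_empty_or_nonempty (A ∩ S1) with h1 | h1
  · -- A ∩ S1 = ∅
    have hA2 : (A ∩ S2).Nonempty := by
      rcases hP'.1 with ha | hb
      · exact absurd ha (by simp [h1])
      · -- B j ∩ S1 nonempty, so B j ∩ S2 = ∅ since not positive
        have hB2 : B j ∩ S2 = ∅ := by
          rcases hQ with h' | h'
          · exact absurd hb (by simp [h'])
          · exact h'
        rcases hP'.2 with h2 | h2
        · exact h2
        · exact absurd h2 (by simp [hB2])
    have hB1 : (B j ∩ S1).Nonempty := by
      rcases hP'.1 with ha | hb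
      · exact absurd ha (by simp [h1])
      · exact hb
    have hB2 : B j ∩ S2 = ∅ := by
      rcases hQ with h' | h'
      · exact absurd hB1 (by simp [h'])
      · exact h'
    refine ⟨Or.inl ⟨⟨h1, hA2, j, hB1, hB2⟩, ?_⟩, j, ?_, hP⟩
    · rintro ⟨hne, -⟩
      simp [h1] at hne
    · simp [positiveTest, hB2]
  · -- A ∩ S1 nonempty
    have hA2 : A ∩ S2 = ∅ := by
      rcases hA with h' | h'
      · exact absurd h1 (by simp [h'])
      · exact h'
    have hB2 : (B j ∩ S2).Nonempty := by
      rcases hP'.2 with ha | hb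
      · exact absurd ha (by simp [hA2])
      · exact hb
    have hB1 : B j ∩ S1 = ∅ := by
      rcases hQ with h' | h'
      · exact h'
      · exact absurd hB2 (by simp [h'])
    refine ⟨Or.inr ⟨⟨h1, hA2, j, hB1, hB2⟩, ?_⟩, j, ?_, hP⟩
    · rintro ⟨he, -⟩
      simp [he] at h1
    · simp [positiveTest, hB1]
end

section
/- Let n, s_1, s_2 be natural numbers with s_1 ≥ 1, s_2 ≥ 1, s := s_1 + s_2 < n, and s dividing n. Let S_1 and S_2 be disjoint subsets of Fin n with |S_1| = s_1 and |S_2| = s_2, and fix i ∈ {1, 2}. Let ε ∈ (0, 1) and let t be a natural number with t ≥ (e^5 / (4π²)) · ln(1/ε) · (s / s_i). If T_1, …, T_t are independent random subsets, each uniformly distributed over the size-(n/s) subsets of Fin n, then with probability at least 1 − ε there exists a trial j ∈ {1, …, t} such that |T_j ∩ S_i| = 1 and T_j ∩ S_{3−i} = ∅. -/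
/-!
A uniformly random `m`-subset `T` of an `n`-set, `n = s m`, meets `S_i` in exactly one point and
misses `S_{3-i}` with probability `q ≥ s_i · C(n - s, m - 1) / C(n, m)`. Since
`C(n, m) = s · C(n - 1, m - 1)`, and each of the `s - 1` steps from `n - 1` down to `n - s`
shrinks `C(·, m - 1)` by a factor of at most `s / (s - 1)`, where `(s / (s - 1)) ^ (s - 1) ≤ e`,
we get `q ≥ s_i / (e s)`. All `t` independent trials fail with probability
`(1 - q) ^ t ≤ exp (-t q) ≤ ε`, because `t q ≥ e⁴ / (4π²) · ln (1/ε)` and `4π² ≤ e⁴`.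
-/

open Finset Real

namespace Nat

theorem mul_choose_succ_le (r k a : ℕ) (h : (r + 1) * k ≤ a) :
    r * (a + 1).choose k ≤ (r + 1) * a.choose k := by
  have hka : k ≤ a := le_trans (Nat.le_mul_of_pos_left k r.succ_pos) h
  refine le_of_mul_le_mul_right ?_ (by omega : 0 < a + 1 - k)
  have hkey : r * (a + 1) ≤ (r + 1) * (a + 1 - k) := by
    zify [hka.trans a.le_succ] at h ⊢; nlinarith
  calc r * (a + 1).choose k * (a + 1 - k) = r * (a + 1) * a.choose k := by
        rw [mul_assoc, ← choose_mul_succ_eq]; ring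
    _ ≤ (r + 1) * (a + 1 - k) * a.choose k := Nat.mul_le_mul_right _ hkey
    _ = (r + 1) * a.choose k * (a + 1 - k) := by ring

theorem pow_mul_choose_add_le (r k a j : ℕ) (h : (r + 1) * k ≤ a) :
    r ^ j * (a + j).choose k ≤ (r + 1) ^ j * a.choose k := by
  induction j with
  | zero => simp
  | succ j ih =>
    calc r ^ (j + 1) * (a + (j + 1)).choose k = r ^ j * (r * (a + j + 1).choose k) := by ring_nf
      _ ≤ r ^ j * ((r + 1) * (a + j).choose k) :=
        Nat.mul_le_mul_left _ (mul_choose_succ_le r k (a + j) (by omega))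
      _ = (r + 1) * (r ^ j * (a + j).choose k) := by ring
      _ ≤ (r + 1) * ((r + 1) ^ j * a.choose k) := Nat.mul_le_mul_left _ ih
      _ = (r + 1) ^ (j + 1) * a.choose k := by ring

theorem choose_mul_succ_eq_mul_choose (r k : ℕ) :
    ((r + 1) * (k + 1)).choose (k + 1) = (r + 1) * ((r + 1) * k + r).choose k := by
  have hid := add_one_mul_choose_eq ((r + 1) * k + r) k
  rw [show (r + 1) * k + r + 1 = (r + 1) * (k + 1) by ring] at hid
  refine eq_of_mul_eq_mul_right k.succ_pos ?_
  rw [← hid, succ_eq_add_one]; ring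

theorem choose_mul_succ_le_exp_one_mul (r k : ℕ) :
    (((r + 1) * (k + 1)).choose (k + 1) : ℝ) ≤ exp 1 * (r + 1) * ((r + 1) * k).choose k := by
  have hstep :
      (((r + 1) * k + r).choose k : ℝ) ≤ (1 + (r : ℝ)⁻¹) ^ r * ((r + 1) * k).choose k := by
    rcases r.eq_zero_or_pos with rfl | hr
    · simp
    have hr' : (0 : ℝ) < (r : ℝ) ^ r := by positivity
    have h := pow_mul_choose_add_le r k ((r + 1) * k) r le_rfl
    have hbase : (1 + (r : ℝ)⁻¹) ^ r = ((r : ℝ) + 1) ^ r / (r : ℝ) ^ r := by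
      rw [← div_pow]; field_simp
    rw [hbase, div_mul_eq_mul_div, le_div_iff₀' hr']
    exact_mod_cast h
  rw [choose_mul_succ_eq_mul_choose]
  push_cast
  calc ((r : ℝ) + 1) * (((r + 1) * k + r).choose k : ℕ)
      ≤ (r + 1) * ((1 + (r : ℝ)⁻¹) ^ r * ((r + 1) * k).choose k) :=
        mul_le_mul_of_nonneg_left hstep (by positivity)
    _ ≤ (r + 1) * (exp 1 * ((r + 1) * k).choose k) := by gcongr; exact one_add_inv_pow_le_exp
    _ = _ := by ring

end Nat

section Counting

variable {α : Type*} [Fintype α] [DecidableEq α]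

theorem card_mul_choose_le_card_filter {A B : Finset α} (hAB : Disjoint A B) (k : ℕ) :
    #A * (Fintype.card α - (#A + #B)).choose k ≤
      #{T : Finset α | #T = k + 1 ∧ #(T ∩ A) = 1 ∧ T ∩ B = ∅} := by
  rw [← card_union_of_disjoint hAB, ← card_compl, ← card_powersetCard, ← card_product]
  have key : ∀ x ∈ A, ∀ R ∈ powersetCard k (A ∪ B)ᶜ,
      x ∉ R ∧ insert x R ∩ A = {x} ∧ insert x R ∩ B = ∅ := by
    intro x hx R hR
    obtain ⟨hRA, hRB⟩ :=
      disjoint_union_right.1 (subset_compl_iff_disjoint_right.1 (mem_powersetCard.1 hR).1)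
    refine ⟨fun h => disjoint_left.1 hRA h hx, ?_, ?_⟩
    · rw [insert_inter_of_mem hx, disjoint_iff_inter_eq_empty.1 hRA, insert_empty]
    · rw [insert_inter_of_notMem (disjoint_left.1 hAB hx), disjoint_iff_inter_eq_empty.1 hRB]
  -- `insert x R` is inverted by taking the point of `insert x R ∩ A` and erasing it
  refine card_le_card_of_injOn (fun p => insert p.1 p.2) ?_ ?_
  · rintro ⟨x, R⟩ hp
    obtain ⟨hx, hR⟩ := mem_product.1 hp
    obtain ⟨hxR, hA, hB⟩ := key x hx R hR
    simp only [coe_filter, Set.mem_ofPred_eq, mem_univ, true_and]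
    exact ⟨by rw [card_insert_of_notMem hxR, (mem_powersetCard.1 hR).2],
      by rw [hA, card_singleton], hB⟩
  · rintro ⟨x, R⟩ hp ⟨x', R'⟩ hp' (heq : insert x R = insert x' R')
    obtain ⟨hx, hR⟩ := mem_product.1 hp
    obtain ⟨hx', hR'⟩ := mem_product.1 hp'
    obtain ⟨hxR, hA, -⟩ := key x hx R hR
    obtain ⟨hxR', hA', -⟩ := key x' hx' R' hR'
    have hxx : x = x' := singleton_injective (hA.symm.trans (heq ▸ hA'))
    subst hxx
    simp only [Prod.mk.injEq, true_and]
    rw [← erase_insert hxR, heq, erase_insert hxR']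

omit [DecidableEq α] in
theorem card_filter_subtype {p q : α → Prop} [DecidablePred p] [DecidablePred q] :
    #{x : {x // p x} | q x} = #{x | p x ∧ q x} := by
  rw [← Fintype.card_subtype, ← Fintype.card_subtype,
    Fintype.card_congr (Equiv.subtypeSubtypeEquivSubtypeInter p q)]

theorem div_le_card_filter_div_choose {A B : Finset α} (hAB : Disjoint A B) {r k : ℕ}
    (hα : Fintype.card α = (r + 1) * (k + 1)) (hσ : #A + #B = r + 1) :
    (#A : ℝ) / (exp 1 * (r + 1)) ≤
      #{T : Finset α | #T = k + 1 ∧ #(T ∩ A) = 1 ∧ T ∩ B = ∅} /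
        (Fintype.card α).choose (k + 1) := by
  have hcount := card_mul_choose_le_card_filter hAB k
  rw [hσ, hα, show (r + 1) * (k + 1) - (r + 1) = (r + 1) * k by ring_nf; omega] at hcount
  have hchoose : 0 < ((r + 1) * (k + 1)).choose (k + 1) :=
    Nat.choose_pos (Nat.le_mul_of_pos_left _ r.succ_pos)
  rw [hα, div_le_div_iff₀ (by positivity) (by exact_mod_cast hchoose)]
  calc (#A : ℝ) * ((r + 1) * (k + 1)).choose (k + 1)
      ≤ #A * (exp 1 * (r + 1) * ((r + 1) * k).choose k) := by
        gcongr; exact_mod_cast Nat.choose_mul_succ_le_exp_one_mul r k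
    _ = (#A * ((r + 1) * k).choose k : ℕ) * (exp 1 * (r + 1)) := by push_cast; ring
    _ ≤ _ := by gcongr

end Counting

section Trials

variable {Ω : Type*} [Fintype Ω]

theorem card_filter_exists_div_card_pi [Nonempty Ω] (p : Ω → Prop) [DecidablePred p] (t : ℕ) :
    (#{f : Fin t → Ω | ∃ j, p (f j)} : ℝ) / Fintype.card (Fin t → Ω) =
      1 - (1 - #{x | p x} / Fintype.card Ω) ^ t := by
  have hfail : #{f : Fin t → Ω | ¬ ∃ j, p (f j)} = #{x | ¬ p x} ^ t := by
    have hpi : ({f : Fin t → Ω | ¬ ∃ j, p (f j)} : Finset _) =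
        Fintype.piFinset fun _ => {x | ¬ p x} := by
      ext f; simp [Fintype.mem_piFinset]
    rw [hpi, Fintype.card_piFinset, prod_const, card_univ, Fintype.card_fin]
  have hall := card_filter_add_card_filter_not (s := univ) (fun f : Fin t → Ω => ∃ j, p (f j))
  have hone := card_filter_add_card_filter_not (s := univ) p
  rw [hfail, card_univ, Fintype.card_fun, Fintype.card_fin] at hall
  rw [card_univ] at hone
  have hΩ : (Fintype.card Ω : ℝ) ≠ 0 := by positivity
  rw [Fintype.card_fun, Fintype.card_fin, Nat.cast_pow, one_sub_div hΩ, div_pow,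
    eq_sub_iff_add_eq, ← add_div, div_eq_one_iff_eq (pow_ne_zero t hΩ)]
  have hcompl : (Fintype.card Ω : ℝ) - #{x | p x} = #{x | ¬ p x} := by
    rw [← hone]; push_cast; ring
  rw [hcompl]
  exact_mod_cast hall

theorem one_sub_pow_le_of_log_le_mul {q ε : ℝ} {t : ℕ} (hε : 0 < ε) (hq : q ≤ 1)
    (h : log (1 / ε) ≤ t * q) : (1 - q) ^ t ≤ ε := by
  calc (1 - q) ^ t ≤ exp (-q) ^ t := pow_le_pow_left₀ (by linarith) (one_sub_le_exp_neg q) t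
    _ = exp (-(t * q)) := by rw [← exp_nat_mul]; ring_nf
    _ ≤ exp (-log (1 / ε)) := exp_le_exp.2 (neg_le_neg h)
    _ = ε := by rw [one_div, log_inv, neg_neg, exp_log hε]

end Trials

theorem four_mul_pi_sq_le_exp_four : 4 * π ^ 2 ≤ exp 4 := by
  have he : (2.7182818283 : ℝ) ^ 4 ≤ exp 1 ^ 4 :=
    pow_le_pow_left₀ (by norm_num) exp_one_gt_d9.le 4
  have hπ : π ^ 2 ≤ 3.15 ^ 2 := pow_le_pow_left₀ pi_pos.le pi_lt_d2.le 2
  have h4 : exp 4 = exp 1 ^ 4 := by rw [exp_one_pow]; norm_num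
  rw [h4]
  norm_num at he hπ
  linarith

theorem le_mul_of_exp_five_div_mul_le {L a b q : ℝ} {t : ℕ} (hL : 0 ≤ L) (ha : 0 < a)
    (hb : 0 < b) (ht : exp 5 / (4 * π ^ 2) * L * (b / a) ≤ t) (hq : a / (exp 1 * b) ≤ q) :
    L ≤ t * q := by
  have he5 : exp 5 = exp 4 * exp 1 := by rw [← exp_add]; norm_num
  calc L ≤ exp 4 / (4 * π ^ 2) * L :=
        le_mul_of_one_le_left hL ((one_le_div (by positivity)).2 four_mul_pi_sq_le_exp_four)
    _ = exp 5 / (4 * π ^ 2) * L * (b / a) * (a / (exp 1 * b)) := by rw [he5]; field_simp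
    _ ≤ t * q := mul_le_mul ht hq (by positivity) (Nat.cast_nonneg t)

/-- Random sampling lemma for ConcGT: with `S 0, S 1` disjoint subsets of `Fin n` of sizes
`s 0 ≥ 1`, `s 1 ≥ 1`, `s = s 0 + s 1 < n` dividing `n`, and
`t ≥ (e⁵/(4π²)) · ln(1/ε) · (s / s i)` independent uniform draws of size-`(n/s)` subsets
(modeled by the uniform distribution on tuples of size-`(n/s)` subsets), with probability at
least `1 − ε` some trial contains exactly one item of `S i` and no item of the other set. -/
theorem stmt14 (n : ℕ) (s : Fin 2 → ℕ) (hs : ∀ i, 1 ≤ s i)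
    (hlt : s 0 + s 1 < n) (hdvd : (s 0 + s 1) ∣ n)
    (S : Fin 2 → Finset (Fin n)) (hdisj : Disjoint (S 0) (S 1))
    (hcard : ∀ i, (S i).card = s i)
    (i : Fin 2) (ε : ℝ) (hε0 : 0 < ε) (hε1 : ε < 1)
    (t : ℕ)
    (ht : Real.exp 5 / (4 * Real.pi ^ 2) * Real.log (1 / ε) *
            ((s 0 + s 1 : ℕ) / (s i : ℕ) : ℝ) ≤ (t : ℝ)) :
    1 - ε ≤
      ((Finset.univ.filter
          (fun f : Fin t → {T : Finset (Fin n) // T.card = n / (s 0 + s 1)} =>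
            ∃ j : Fin t, ((f j : Finset (Fin n)) ∩ S i).card = 1 ∧
              (f j : Finset (Fin n)) ∩ S (i + 1) = ∅)).card : ℝ) /
        ((Finset.univ : Finset (Fin t → {T : Finset (Fin n) // T.card = n / (s 0 + s 1)})).card : ℝ) := by
  obtain ⟨r, hr⟩ : ∃ r, s 0 + s 1 = r + 1 := ⟨s 0 + s 1 - 1, by have := hs 0; omega⟩
  obtain ⟨m, hm⟩ := hdvd
  obtain ⟨k, rfl⟩ : ∃ k, m = k + 1 :=
    Nat.exists_eq_add_one.2 (Nat.pos_of_ne_zero (by rintro rfl; simp [hm] at hlt))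
  have hnk : n / (s 0 + s 1) = k + 1 := by rw [hm, hr, Nat.mul_div_cancel_left _ r.succ_pos]
  have hα : Fintype.card (Fin n) = (r + 1) * (k + 1) := by rw [Fintype.card_fin, hm, hr]
  obtain ⟨hAB, hσ⟩ : Disjoint (S i) (S (i + 1)) ∧ #(S i) + #(S (i + 1)) = r + 1 := by
    fin_cases i <;> simp [hdisj, hdisj.symm, hcard, ← hr, add_comm]
  rw [card_univ]
  set Ω := {T : Finset (Fin n) // #T = n / (s 0 + s 1)}
  have hΩ : Fintype.card Ω = ((r + 1) * (k + 1)).choose (k + 1) := by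
    rw [Fintype.card_finset_len, hα, hnk]
  have : Nonempty Ω :=
    Fintype.card_pos_iff.1 (hΩ ▸ Nat.choose_pos (Nat.le_mul_of_pos_left _ r.succ_pos))
  rw [card_filter_exists_div_card_pi (fun T : Ω => #(T.1 ∩ S i) = 1 ∧ T.1 ∩ S (i + 1) = ∅)]
  set q : ℝ := #{T : Ω | #(T.1 ∩ S i) = 1 ∧ T.1 ∩ S (i + 1) = ∅} / Fintype.card Ω
  have hq1 : q ≤ 1 := div_le_one_of_le₀ (by exact_mod_cast card_le_univ _) (Nat.cast_nonneg _)
  have hq : (s i : ℝ) / (exp 1 * (s 0 + s 1 : ℕ)) ≤ q := by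
    have h := div_le_card_filter_div_choose hAB hα hσ
    rw [hr, Nat.cast_add_one]
    rwa [hcard, hα, ← hΩ, ← hnk, ← card_filter_subtype] at h
  refine sub_le_sub_left (one_sub_pow_le_of_log_le_mul hε0 hq1 ?_) 1
  exact le_mul_of_exp_five_div_mul_le (log_nonneg (one_le_one_div hε0 hε1.le))
    (by exact_mod_cast hs i) (by rw [hr]; positivity) ht hq
end
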